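/- Let d = (a,b) be a bidegree sequence with Σ_n a_n = Σ_n b_n + 1, and let i, j be indices with a_i ≥ a_j > 0. Define d_{-i} = (a - e_i, b) and d_{-j} = (a - e_j, b). Then ‖G_{d_{-i}}‖ ≥ (a_i / a_j) · ‖G_{d_{-j}}‖, where ‖G_d‖ is the number of directed graphs (loops allowed) realizing d. -/

import Mathlib

/-- In-degree of node `v` (edge `u → v` when `A u v = true`); loops allowed. -/
def inDeg {N : ℕ} (A : Fin N → Fin N → Bool) (v : Fin N) : ℕ :=
  (Finset.univ.filter (fun u => A u v = true)).card

/-- Out-degree of node `v`. -/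
def outDeg {N : ℕ} (A : Fin N → Fin N → Bool) (v : Fin N) : ℕ :=
  (Finset.univ.filter (fun u => A v u = true)).card

/-- Number of directed graphs (loops allowed, no multi-edges) realizing `(a,b)`. -/
noncomputable def numGraphs {N : ℕ} (a b : Fin N → ℕ) : ℕ :=
  Nat.card {A : Fin N → Fin N → Bool // ∀ v, inDeg A v = a v ∧ outDeg A v = b v}

/-!
Fibre the realizations over their entries outside the columns `i` and `j`. Within a fibre every
row has a fixed number of edges into `{i, j}` (its out-degree minus the fixed part), so the number
`p` of rows pointing to both `i` and `j` is constant. Redirecting an edge `u → i` to `u → j` in a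
row pointing to `i` only maps realizations of `a - e_j` to realizations of `a - e_i` and is its own
inverse on marked pairs (graph, row). A graph of the first kind has `a_i - p` such rows and one of
the second kind has `a_j - p`, so the fibres `X`, `Y` satisfy `|X| (a_i - p) = |Y| (a_j - p)`, and
`p < a_j ≤ a_i` gives `a_i |X| ≤ a_j |Y|`.
-/

open Finset

theorem Nat.mul_le_mul_of_mul_tsub_eq {x y m n p : ℕ} (hp : p < m) (hmn : m ≤ n)
    (h : x * (n - p) = y * (m - p)) : n * x ≤ m * y := by
  obtain ⟨s, rfl⟩ : ∃ s, m = p + s + 1 := ⟨m - p - 1, by omega⟩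
  obtain ⟨t, rfl⟩ : ∃ t, n = p + s + 1 + t := ⟨n - (p + s + 1), by omega⟩
  rw [show p + s + 1 + t - p = s + 1 + t by omega, show p + s + 1 - p = s + 1 by omega] at h
  refine _root_.le_of_mul_le_mul_right ?_ s.succ_pos
  calc (p + s + 1 + t) * x * (s + 1) ≤ (p + s + 1) * (x * (s + 1 + t)) := by
        nlinarith [Nat.zero_le (x * p * t)]
    _ = (p + s + 1) * y * (s + 1) := by rw [h]; ring

section Rows

variable {α : Type*} [Fintype α]

theorem card_filter_comp_perm (f : α → Bool) (σ : Equiv.Perm α) :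
    #{x | f (σ x) = true} = #{x | f x = true} :=
  card_equiv σ (by simp)

variable [DecidableEq α]

theorem card_filter_update_true {f : α → Bool} {u : α} (hu : f u = false) :
    #{x | Function.update f u true x = true} = #{x | f x = true} + 1 := by
  have : univ.filter (fun x => Function.update f u true x = true)
      = insert u (univ.filter fun x => f x = true) := by
    ext x
    by_cases hx : x = u <;> simp [hx]
  rw [this, card_insert_of_notMem (by simp [hu])]

theorem card_filter_update_false {f : α → Bool} {u : α} (hu : f u = true) :
    #{x | Function.update f u false x = true} + 1 = #{x | f x = true} := by
  have := card_filter_update_true (f := Function.update f u false) (u := u) (by simp)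
  rw [Function.update_idem, Function.update_eq_self_iff.mpr hu.symm] at this
  exact this.symm

theorem and_iff_and_of_card_filter_eq {f g : α → Bool} {i j : α}
    (hcard : #{v | f v = true} = #{v | g v = true}) (hoff : ∀ v, v ≠ i → v ≠ j → f v = g v) :
    f i = true ∧ f j = true ↔ g i = true ∧ g j = true := by
  have hsplit (h : α → Bool) : #{v ∈ {i, j} | h v = true} + #{v ∈ {i, j}ᶜ | h v = true}
      = #{v | h v = true} := by
    rw [← card_union_of_disjoint (disjoint_filter_filter disjoint_compl_right), ← filter_union,
      union_compl]
  have hrest : ({i, j}ᶜ : Finset α).filter (fun v => f v = true)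
      = ({i, j}ᶜ : Finset α).filter (fun v => g v = true) :=
    filter_congr fun v hv => by
      simp only [mem_compl, mem_insert, mem_singleton, not_or] at hv
      rw [hoff v hv.1 hv.2]
  have hpair : #{v ∈ {i, j} | f v = true} = #{v ∈ {i, j} | g v = true} := by
    have := hsplit f
    rw [hrest] at this
    have := hsplit g
    omega
  have hfull (h : α → Bool) : h i = true ∧ h j = true ↔ #{v ∈ {i, j} | h v = true} = #{i, j} := by
    rw [card_filter_eq_iff]
    simp
  rw [hfull, hfull, hpair]

end Rows

variable {N : ℕ}

def Realizes (A : Fin N → Fin N → Bool) (a b : Fin N → ℕ) : Prop :=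
  ∀ v, inDeg A v = a v ∧ outDeg A v = b v

instance (a b : Fin N → ℕ) : DecidablePred (Realizes · a b) :=
  fun A => inferInstanceAs (Decidable (∀ v, inDeg A v = a v ∧ outDeg A v = b v))

def realizations (a b : Fin N → ℕ) : Finset (Fin N → Fin N → Bool) :=
  {A | Realizes A a b}

theorem mem_realizations {A : Fin N → Fin N → Bool} {a b : Fin N → ℕ} :
    A ∈ realizations a b ↔ Realizes A a b := by
  simp [realizations]

theorem numGraphs_eq_card_realizations (a b : Fin N → ℕ) :
    numGraphs a b = #(realizations a b) := by
  rw [numGraphs, Nat.card_eq_fintype_card, Fintype.card_subtype]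
  rfl

theorem inDeg_eq_card_filter_add_card_filter (A : Fin N → Fin N → Bool) (i j : Fin N) :
    inDeg A i = #{u | A u i = true ∧ A u j = false} + #{u | A u i = true ∧ A u j = true} := by
  rw [inDeg, ← card_filter_add_card_filter_not (p := fun u => A u j = false), filter_filter,
    filter_filter]
  simp

def swapEntries (A : Fin N → Fin N → Bool) (u i j : Fin N) : Fin N → Fin N → Bool :=
  Function.update A u (A u ∘ Equiv.swap i j)

def maskCols (i j : Fin N) (A : Fin N → Fin N → Bool) : Fin N → Fin N → Bool :=
  fun u v => if v = i ∨ v = j then false else A u v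

section SwapEntries

variable (A : Fin N → Fin N → Bool) (u i j : Fin N)

theorem swapEntries_comm : swapEntries A u i j = swapEntries A u j i := by
  rw [swapEntries, swapEntries, Equiv.swap_comm]

theorem swapEntries_swapEntries : swapEntries (swapEntries A u i j) u i j = A := by
  ext w v
  by_cases hw : w = u
  · subst hw
    simp [swapEntries]
  · simp [swapEntries, hw]

theorem inDeg_swapEntries (v : Fin N) : inDeg (swapEntries A u i j) v
    = #{w | Function.update (fun w => A w v) u (A u (Equiv.swap i j v)) w = true} := by
  simp only [inDeg, swapEntries, Function.update_apply]
  congr! 3 with w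
  split_ifs <;> simp_all

theorem swapEntries_apply_left : swapEntries A u i j u i = A u j := by
  simp [swapEntries]

theorem swapEntries_apply_right : swapEntries A u i j u j = A u i := by
  simp [swapEntries]

theorem outDeg_swapEntries (v : Fin N) : outDeg (swapEntries A u i j) v = outDeg A v := by
  by_cases hv : v = u
  · subst hv
    simpa [outDeg, swapEntries] using card_filter_comp_perm (A v) (Equiv.swap i j)
  · simp [outDeg, swapEntries, hv]

theorem maskCols_swapEntries : maskCols i j (swapEntries A u i j) = maskCols i j A := by
  ext w v
  simp only [maskCols]
  split_ifs with hv
  · rfl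
  · push Not at hv
    by_cases hw : w = u
    · subst hw
      simp [swapEntries, Equiv.swap_apply_of_ne_of_ne hv.1 hv.2]
    · simp [swapEntries, hw]

variable {A u i j}

theorem inDeg_swapEntries_left (hi : A u i = true) (hj : A u j = false) :
    inDeg (swapEntries A u i j) i + 1 = inDeg A i := by
  rw [inDeg_swapEntries, Equiv.swap_apply_left, hj]
  exact card_filter_update_false hi

theorem inDeg_swapEntries_right (hi : A u i = true) (hj : A u j = false) :
    inDeg (swapEntries A u i j) j = inDeg A j + 1 := by
  rw [inDeg_swapEntries, Equiv.swap_apply_right, hi]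
  exact card_filter_update_true hj

theorem inDeg_swapEntries_of_ne {v : Fin N} (hvi : v ≠ i) (hvj : v ≠ j) :
    inDeg (swapEntries A u i j) v = inDeg A v := by
  rw [inDeg_swapEntries, Equiv.swap_apply_of_ne_of_ne hvi hvj, Function.update_eq_self]
  rfl

end SwapEntries

theorem filter_and_eq_of_outDeg_eq {A B : Fin N → Fin N → Bool} {i j : Fin N}
    (hout : ∀ v, outDeg A v = outDeg B v) (hmask : maskCols i j A = maskCols i j B) :
    univ.filter (fun u => A u i = true ∧ A u j = true)
      = univ.filter (fun u => B u i = true ∧ B u j = true) := by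
  ext u
  simp only [mem_filter, mem_univ, true_and]
  refine and_iff_and_of_card_filter_eq (hout u) fun v hvi hvj => ?_
  simpa [maskCols, hvi, hvj] using congrFun (congrFun hmask u) v

def realizationsFibre (a b : Fin N → ℕ) (i j : Fin N) (r : Fin N → Fin N → Bool) :
    Finset (Fin N → Fin N → Bool) :=
  {A ∈ realizations a b | maskCols i j A = r}

theorem mem_realizationsFibre {A r : Fin N → Fin N → Bool} {a b : Fin N → ℕ} {i j : Fin N} :
    A ∈ realizationsFibre a b i j r ↔ Realizes A a b ∧ maskCols i j A = r := by
  rw [realizationsFibre, mem_filter, mem_realizations]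

section Fibre

variable {a a' b : Fin N → ℕ} {i j : Fin N}

theorem Realizes.swapEntries {A : Fin N → Fin N → Bool} {u : Fin N} (hA : Realizes A a b)
    (hi : A u i = true) (hj : A u j = false) (hai : a i = a' i + 1) (haj : a' j = a j + 1)
    (ha : ∀ v, v ≠ i → v ≠ j → a v = a' v) : Realizes (swapEntries A u i j) a' b := by
  intro v
  refine ⟨?_, (outDeg_swapEntries A u i j v).trans (hA v).2⟩
  by_cases hvi : v = i
  · subst hvi
    have := inDeg_swapEntries_left hi hj
    have := (hA v).1
    omega
  by_cases hvj : v = j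
  · subst hvj
    rw [inDeg_swapEntries_right hi hj, (hA v).1, haj]
  rw [inDeg_swapEntries_of_ne hvi hvj, (hA v).1, ha v hvi hvj]

theorem card_sigma_realizationsFibre_eq (hai : a i = a' i + 1) (haj : a' j = a j + 1)
    (ha : ∀ v, v ≠ i → v ≠ j → a v = a' v) (r : Fin N → Fin N → Bool) :
    #((realizationsFibre a b i j r).sigma
        fun A => ({u | A u i = true ∧ A u j = false} : Finset (Fin N)))
      = #((realizationsFibre a' b i j r).sigma
        fun B => ({u | B u j = true ∧ B u i = false} : Finset (Fin N))) := by
  refine card_nbij' (fun x => ⟨swapEntries x.1 x.2 i j, x.2⟩)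
    (fun x => ⟨swapEntries x.1 x.2 i j, x.2⟩) ?_ ?_ ?_ ?_
  · rintro ⟨A, u⟩ hx
    simp only [coe_sigma, Set.mem_sigma_iff, mem_coe, mem_realizationsFibre, mem_filter,
      mem_univ, true_and] at hx ⊢
    obtain ⟨⟨hA, rfl⟩, hi, hj⟩ := hx
    exact ⟨⟨hA.swapEntries hi hj hai haj ha, maskCols_swapEntries A u i j⟩,
      by rwa [swapEntries_apply_right], by rwa [swapEntries_apply_left]⟩
  · rintro ⟨B, u⟩ hx
    simp only [coe_sigma, Set.mem_sigma_iff, mem_coe, mem_realizationsFibre, mem_filter,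
      mem_univ, true_and] at hx ⊢
    obtain ⟨⟨hB, rfl⟩, hj, hi⟩ := hx
    refine ⟨⟨?_, maskCols_swapEntries B u i j⟩,
      by rwa [swapEntries_apply_left], by rwa [swapEntries_apply_right]⟩
    rw [swapEntries_comm]
    exact hB.swapEntries hj hi haj hai fun v hvj hvi => (ha v hvi hvj).symm
  · rintro ⟨A, u⟩ -
    simp [swapEntries_swapEntries]
  · rintro ⟨B, u⟩ -
    simp [swapEntries_swapEntries]

theorem mul_card_realizationsFibre_le (hai : a i = a' i + 1) (haj : a' j = a j + 1)
    (ha : ∀ v, v ≠ i → v ≠ j → a v = a' v) (hle : a' j ≤ a i) (r : Fin N → Fin N → Bool) :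
    a i * #(realizationsFibre a b i j r) ≤ a' j * #(realizationsFibre a' b i j r) := by
  rcases eq_empty_or_nonempty (realizationsFibre a b i j r) with hX | ⟨A₀, hA₀⟩
  · simp [hX]
  rw [mem_realizationsFibre] at hA₀
  set p := #{u | A₀ u i = true ∧ A₀ u j = true}
  have hcommon (c : Fin N → ℕ) (B : Fin N → Fin N → Bool)
      (hB : Realizes B c b ∧ maskCols i j B = r) :
      #{u | B u i = true ∧ B u j = true} = p := by
    rw [filter_and_eq_of_outDeg_eq (fun v => (hB.1 v).2.trans (hA₀.1 v).2.symm)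
      (hB.2.trans hA₀.2.symm)]
  have hrowsX : ∀ A ∈ realizationsFibre a b i j r,
      #{u | A u i = true ∧ A u j = false} = a i - p := fun A hA => by
    rw [mem_realizationsFibre] at hA
    have := inDeg_eq_card_filter_add_card_filter A i j
    rw [hcommon a A hA, (hA.1 i).1] at this
    omega
  have hrowsY : ∀ B ∈ realizationsFibre a' b i j r,
      #{u | B u j = true ∧ B u i = false} = a' j - p := fun B hB => by
    rw [mem_realizationsFibre] at hB
    have := inDeg_eq_card_filter_add_card_filter B j i
    rw [filter_congr (p := fun u => B u j = true ∧ B u i = true) fun _ _ => and_comm,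
      hcommon a' B hB, (hB.1 j).1] at this
    omega
  have hp : p < a' j := by
    have : p ≤ inDeg A₀ j := card_le_card fun u hu => by
      simp only [mem_filter, mem_univ, true_and] at hu ⊢
      exact hu.2
    have := (hA₀.1 j).1
    omega
  have hcount := card_sigma_realizationsFibre_eq (b := b) hai haj ha r
  rw [card_sigma, card_sigma, sum_congr rfl hrowsX, sum_congr rfl hrowsY, sum_const, sum_const,
    smul_eq_mul, smul_eq_mul] at hcount
  exact Nat.mul_le_mul_of_mul_tsub_eq hp hle hcount

theorem mul_numGraphs_le (hai : a i = a' i + 1) (haj : a' j = a j + 1)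
    (ha : ∀ v, v ≠ i → v ≠ j → a v = a' v) (hle : a' j ≤ a i) :
    a i * numGraphs a b ≤ a' j * numGraphs a' b := by
  rw [numGraphs_eq_card_realizations, numGraphs_eq_card_realizations,
    card_eq_sum_card_fiberwise (f := maskCols i j) (t := univ) (fun _ _ => mem_univ _),
    card_eq_sum_card_fiberwise (f := maskCols i j) (t := univ) (fun _ _ => mem_univ _),
    mul_sum, mul_sum]
  exact sum_le_sum fun r _ => mul_card_realizationsFibre_le hai haj ha hle r

end Fibre

theorem stmt_3_general (N : ℕ) (a b : Fin N → ℕ) (i j : Fin N) (hij : i ≠ j)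
    (hj : 0 < a j) (h : a j ≤ a i) :
    a i * numGraphs (fun n => if n = j then a j - 1 else a n) b ≤
      a j * numGraphs (fun n => if n = i then a i - 1 else a n) b := by
  have key := mul_numGraphs_le (a := fun n => if n = j then a j - 1 else a n)
    (a' := fun n => if n = i then a i - 1 else a n) (b := b) (i := i) (j := j)
    (by simp only [hij, ↓reduceIte]; omega) (by simp only [hij.symm, ↓reduceIte]; omega)
    (fun v hvi hvj => by simp [hvi, hvj])
    (by simpa [hij, hij.symm] using h)
  simpa [hij, hij.symm] using key

/-- Corollary 1: if `∑ a = ∑ b + 1` and `a_i ≥ a_j > 0`, then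
`‖G_{d_{-i}}‖ ≥ (a_i / a_j) ‖G_{d_{-j}}‖`, i.e.
`a_j · ‖G_{(a - e_i, b)}‖ ≥ a_i · ‖G_{(a - e_j, b)}‖`. -/
theorem stmt_3 (N : ℕ) (a b : Fin N → ℕ) (i j : Fin N) (hij : i ≠ j)
    (hsum : ∑ n, a n = (∑ n, b n) + 1)
    (hj : 0 < a j) (h : a j ≤ a i) :
    a i * numGraphs (fun n => if n = j then a j - 1 else a n) b ≤
      a j * numGraphs (fun n => if n = i then a i - 1 else a n) b :=
  stmt_3_general N a b i j hij hj h
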